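/- Define on ℝ³ × ℝ the Beltrami-type velocity field v with components vₓ = -e^{-t+x} sin(y+z) - e^{-t+z} cos(x+y), v_y = -e^{-t+y} sin(x+z) - e^{-t+x} cos(y+z), v_z = -e^{-t+z} sin(x+y) - e^{-t+y} cos(x+z). Then div v = 0 for all (x,y,z,t). -/

import Mathlib

open Real

/-- The Beltrami velocity field: component `i` at spatial point `(x, y, z)` and time `t`. -/
noncomputable def beltrami (x y z t : ℝ) : Fin 3 → ℝ :=
  ![-exp (-t + x) * sin (y + z) - exp (-t + z) * cos (x + y),
    -exp (-t + y) * sin (x + z) - exp (-t + x) * cos (y + z),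
    -exp (-t + z) * sin (x + y) - exp (-t + y) * cos (x + z)]

theorem hasDerivAt_neg_exp_mul_sub_exp_mul_cos (t a b c s : ℝ) :
    HasDerivAt (fun s => -exp (-t + s) * sin a - exp (-t + c) * cos (s + b))
      (-exp (-t + s) * sin a + exp (-t + c) * sin (s + b)) s := by
  have hexp : HasDerivAt (fun s => exp (-t + s)) (exp (-t + s)) s := by
    simpa using ((hasDerivAt_id s).const_add (-t)).exp
  have hcos : HasDerivAt (fun s => cos (s + b)) (-sin (s + b)) s := by
    simpa using ((hasDerivAt_id s).add_const b).cos
  exact ((hexp.neg.mul_const (sin a)).sub (hcos.const_mul (exp (-t + c)))).congr_deriv (by ring)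

/-- The Beltrami velocity field is divergence free. -/
theorem stmt_10 :
    ∀ x y z t : ℝ,
      deriv (fun s => beltrami s y z t 0) x
        + deriv (fun s => beltrami x s z t 1) y
        + deriv (fun s => beltrami x y s t 2) z = 0 := by
  intro x y z t
  have hx := (hasDerivAt_neg_exp_mul_sub_exp_mul_cos t (y + z) y z x).deriv
  have hy := (hasDerivAt_neg_exp_mul_sub_exp_mul_cos t (x + z) z x y).deriv
  have hz := (hasDerivAt_neg_exp_mul_sub_exp_mul_cos t (x + y) x y z).deriv
  simp only [add_comm _ x] at hz
  simp only [beltrami, Matrix.cons_val]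
  rw [hx, hy, hz]
  ring
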